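/- arXiv:1812.11325 — 4 statements merged into one kernel-verified Lean document; each statement's English description precedes it below -/
import Mathlib

section
/- Let λ be the product measure (uniform on S²) × (Lebesgue on ℝ₊) × (uniform on S²) on 𝔻 = S² × ℝ₊ × S², and fix a unit vector e ∈ S². Then the λ-measure of the set Â' := {(u,h,v) ∈ 𝔻 : ∠(−e, u) ≤ 2/h} is finite, and likewise the λ-measure of Ã' := {(u,h,v) ∈ 𝔻 : ∠(−u, v) ≤ 2/h} is finite. -/
open MeasureTheory ProbabilityTheory InnerProductGeometry Real Set
open scoped ENNReal NNReal

noncomputable section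

abbrev E3 : Type := EuclideanSpace ℝ (Fin 3)
abbrev S2 : Type := Metric.sphere (0 : E3) 1

/-- Uniform (normalized) probability measure on the unit sphere `S²`. -/
noncomputable def uniformS2 : Measure S2 :=
  ((volume : Measure E3).toSphere Set.univ)⁻¹ • (volume : Measure E3).toSphere

/-- Uniform measure on `S²`, viewed as a measure on `ℝ³` (supported on the sphere). -/
noncomputable def uniformS2amb : Measure E3 := uniformS2.map Subtype.val

/-- Cross product on `ℝ³`. -/
noncomputable def cross3 (u v : E3) : E3 :=
  (WithLp.equiv 2 (Fin 3 → ℝ)).symm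
    (crossProduct ((WithLp.equiv 2 (Fin 3 → ℝ)) u) ((WithLp.equiv 2 (Fin 3 → ℝ)) v))

/-- The flat measure `λ = (uniform on S²) × (Lebesgue on ℝ₊) × (uniform on S²)` on
`𝔻 = S² × ℝ₊ × S²`. -/
noncomputable def lamD : Measure (S2 × ℝ × S2) :=
  uniformS2.prod ((volume.restrict (Set.Ioi (0:ℝ))).prod uniformS2)

/-! A spherical cap of angular radius `t`, coned down to the origin, lies in a cylinder of height 2
and radius `t`, hence in a box of volume `2 (2t)²`; so the uniform measure of the cap is `O(t²)`.
The cap measure at `t = 2/h` is therefore at most `1` for `h ≤ 1` and `O(h⁻²)` for `h ≥ 1`, and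
its integral over `h > 0` is bounded uniformly in the centre of the cap. Both sets are bundles of
such caps: `Â'` is the preimage of `{(h, u) : ∠(-e, u) ≤ 2/h}` under `(u, h, v) ↦ (h, u)`, which
pushes `λ` forward to Lebesgue × uniform, and the fibre of `Ã'` over each `u` is the cap bundle
centred at `-u`. -/

open Module
open scoped Pointwise RealInnerProductSpace

section InnerProductSpace

variable {E : Type*} [NormedAddCommGroup E] [InnerProductSpace ℝ E]

theorem norm_sub_inner_smul_eq_sin_angle_mul {d : E} (hd : ‖d‖ = 1) (x : E) :
    ‖x - ⟪d, x⟫ • d‖ = Real.sin (angle d x) * ‖x‖ := by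
  have hcos : ⟪d, x⟫ = Real.cos (angle d x) * ‖x‖ := by
    rw [← cos_angle_mul_norm_mul_norm, hd, one_mul]
  have hsq : ‖x - ⟪d, x⟫ • d‖ ^ 2 = (Real.sin (angle d x) * ‖x‖) ^ 2 := by
    rw [norm_sub_sq_real, real_inner_smul_right, real_inner_comm d x, norm_smul, hd, hcos,
      Real.norm_eq_abs, mul_one, sq_abs]
    nlinarith [Real.sin_sq_add_cos_sq (angle d x)]
  exact (sq_eq_sq₀ (norm_nonneg _)
    (mul_nonneg (sin_angle_nonneg d x) (norm_nonneg x))).1 hsq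

theorem norm_sub_inner_smul_le_angle_mul {d : E} (hd : ‖d‖ = 1) (x : E) :
    ‖x - ⟪d, x⟫ • d‖ ≤ angle d x * ‖x‖ := by
  rw [norm_sub_inner_smul_eq_sin_angle_mul hd]
  exact mul_le_mul_of_nonneg_right (Real.sin_le (angle_nonneg d x)) (norm_nonneg x)

@[fun_prop]
theorem Measurable.angle {α : Type*} [MeasurableSpace α] [MeasurableSpace E]
    [OpensMeasurableSpace E] [SecondCountableTopology E] {f g : α → E} (hf : Measurable f)
    (hg : Measurable g) :
    Measurable fun a => angle (f a) (g a) :=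
  Real.continuous_arccos.measurable.comp ((hf.inner hg).div (hf.norm.mul hg.norm))

variable [FiniteDimensional ℝ E]

theorem exists_orthonormalBasis_apply_zero_eq {n : ℕ} (hn : finrank ℝ E = n + 1) {d : E}
    (hd : ‖d‖ = 1) : ∃ b : OrthonormalBasis (Fin (n + 1)) ℝ E, b 0 = d := by
  have hd' : Orthonormal ℝ (({0} : Set (Fin (n + 1))).domRestrict fun _ => d) :=
    ⟨fun _ => hd, fun i j hij => (hij (Subsingleton.elim i j)).elim⟩
  obtain ⟨b, hb⟩ := hd'.exists_orthonormalBasis_extension_of_card_eq (by simpa using hn)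
  exact ⟨b, hb 0 rfl⟩

variable [MeasurableSpace E] [BorelSpace E]

theorem volume_cylinder_le {n : ℕ} (hn : finrank ℝ E = n + 1) {d : E} (hd : ‖d‖ = 1) {t : ℝ}
    (ht : 0 ≤ t) :
    volume {x : E | |⟪d, x⟫| ≤ 1 ∧ ‖x - ⟪d, x⟫ • d‖ ≤ t} ≤
      ENNReal.ofReal (2 * (2 * t) ^ n) := by
  obtain ⟨b, hb⟩ := exists_orthonormalBasis_apply_zero_eq hn hd
  set box : Set (Fin (n + 1) → ℝ) := univ.pi (Fin.cons (Icc (-1) 1) fun _ => Icc (-t) t)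
  have hcoord : MeasurePreserving (fun x : E => (b.repr x).ofLp) volume volume :=
    (PiLp.volume_preserving_ofLp _).comp b.measurePreserving_repr
  have hsub : {x : E | |⟪d, x⟫| ≤ 1 ∧ ‖x - ⟪d, x⟫ • d‖ ≤ t} ⊆
      (fun x : E => (b.repr x).ofLp) ⁻¹' box := by
    rintro x ⟨hx₀, hx⟩ i -
    refine Fin.cases ?_ (fun i => ?_) i
    · simpa [b.repr_apply_apply, hb, abs_le] using hx₀
    · have horth : ⟪b i.succ, d⟫ = 0 := by
        rw [← hb]; exact b.orthonormal.2 (Fin.succ_ne_zero i)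
      have hcomp : |⟪b i.succ, x - ⟪d, x⟫ • d⟫| ≤ t := by
        calc _ ≤ ‖b i.succ‖ * ‖x - ⟪d, x⟫ • d‖ := abs_real_inner_le_norm _ _
          _ ≤ t := by rw [b.orthonormal.1, one_mul]; exact hx
      simpa [b.repr_apply_apply, inner_sub_right, real_inner_smul_right, horth, abs_le] using hcomp
  calc _ ≤ volume ((fun x : E => (b.repr x).ofLp) ⁻¹' box) := measure_mono hsub
    _ = volume box := hcoord.measure_preimage
        (MeasurableSet.univ_pi fun i =>
          Fin.cases measurableSet_Icc (fun _ => measurableSet_Icc) i).nullMeasurableSet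
    _ = ENNReal.ofReal (2 * (2 * t) ^ n) := by
      rw [volume_pi_pi, Fin.prod_univ_succ]
      simp only [Fin.cons_zero, Fin.cons_succ, Real.volume_Icc, Finset.prod_const,
        Finset.card_univ, Fintype.card_fin]
      rw [ENNReal.ofReal_mul (by norm_num), ENNReal.ofReal_pow (by linarith)]
      norm_num [two_mul]

theorem toSphere_setOf_angle_le_le {n : ℕ} (hn : finrank ℝ E = n + 1) {d : E} (hd : ‖d‖ = 1)
    {t : ℝ} (ht : 0 ≤ t) :
    (volume : Measure E).toSphere {u | angle d u ≤ t} ≤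
      (n + 1) * ENNReal.ofReal (2 * (2 * t) ^ n) := by
  have hcap : MeasurableSet {u : Metric.sphere (0 : E) 1 | angle d u ≤ t} :=
    measurableSet_le (measurable_const.angle measurable_subtype_coe) measurable_const
  rw [Measure.toSphere_apply' _ hcap, hn, Nat.cast_succ]
  gcongr
  refine le_trans (measure_mono ?_) (volume_cylinder_le hn hd ht)
  rintro _ ⟨r, ⟨hr₀, hr₁⟩, _, ⟨u, hu, rfl⟩, rfl⟩
  have hnorm : ‖r • (u : E)‖ = r := by simp [norm_smul, abs_of_pos hr₀]
  constructor
  · calc |⟪d, r • (u : E)⟫| ≤ ‖d‖ * ‖r • (u : E)‖ := abs_real_inner_le_norm _ _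
      _ ≤ 1 := by rw [hd, hnorm, one_mul]; exact hr₁.le
  · calc _ ≤ angle d (r • (u : E)) * ‖r • (u : E)‖ := norm_sub_inner_smul_le_angle_mul hd _
      _ ≤ t * 1 := by
        rw [angle_smul_right_of_pos _ _ hr₀, hnorm]
        exact mul_le_mul hu hr₁.le hr₀.le ht
      _ = t := mul_one t

end InnerProductSpace

instance : NeZero (volume : Measure E3).toSphere :=
  ⟨(Measure.toSphere_eq_zero_iff_finrank _).not.2 (by simp)⟩

instance : IsProbabilityMeasure uniformS2 := by
  unfold uniformS2; infer_instance

theorem lintegral_Ioi_one_ofReal_rpow_neg_two :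
    ∫⁻ h in Ioi (1 : ℝ), ENNReal.ofReal (h ^ (-2 : ℝ)) = 1 := by
  have hint : IntegrableOn (fun h : ℝ => h ^ (-2 : ℝ)) (Ioi 1) :=
    integrableOn_Ioi_rpow_of_lt (by norm_num) one_pos
  rw [← ofReal_integral_eq_lintegral_ofReal hint
      ((ae_restrict_iff' measurableSet_Ioi).2 (ae_of_all _ fun h hh => (rpow_pos_of_pos
        (one_pos.trans hh) _).le)),
    integral_Ioi_rpow_of_lt (by norm_num) one_pos]
  norm_num

theorem setLIntegral_Ioi_zero_le_of_le_rpow_neg_two {f : ℝ → ℝ≥0∞} {c : ℝ≥0∞}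
    (hf_le_one : ∀ h, f h ≤ 1) (hf_le : ∀ h, 1 < h → f h ≤ c * ENNReal.ofReal (h ^ (-2 : ℝ))) :
    ∫⁻ h in Ioi 0, f h ≤ 1 + c := by
  rw [← Ioc_union_Ioi_eq_Ioi zero_le_one,
    lintegral_union measurableSet_Ioi (Ioc_disjoint_Ioi le_rfl)]
  gcongr
  · calc ∫⁻ h in Ioc 0 1, f h ≤ ∫⁻ _ in Ioc (0 : ℝ) 1, 1 := lintegral_mono hf_le_one
      _ = 1 := by simp
  · calc ∫⁻ h in Ioi 1, f h ≤ ∫⁻ h in Ioi 1, c * ENNReal.ofReal (h ^ (-2 : ℝ)) :=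
          setLIntegral_mono' measurableSet_Ioi hf_le
      _ = c := by
        rw [lintegral_const_mul _ (by fun_prop), lintegral_Ioi_one_ofReal_rpow_neg_two, mul_one]

theorem uniformS2_setOf_angle_le_two_div_le {d : E3} (hd : ‖d‖ = 1) {h : ℝ} (hh : 0 < h) :
    uniformS2 {v | angle d v ≤ 2 / h} ≤
      ((volume : Measure E3).toSphere univ)⁻¹ * 96 * ENNReal.ofReal (h ^ (-2 : ℝ)) := by
  have hcap := toSphere_setOf_angle_le_le (n := 2) (by simp) hd (div_pos two_pos hh).le
  have h96 : ((2 : ℕ) + 1 : ℝ≥0∞) * ENNReal.ofReal (2 * (2 * (2 / h)) ^ 2) =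
      96 * ENNReal.ofReal (h ^ (-2 : ℝ)) := by
    rw [show ((2 : ℕ) + 1 : ℝ≥0∞) = ENNReal.ofReal 3 by norm_num,
      show (96 : ℝ≥0∞) = ENNReal.ofReal 96 by norm_num, ← ENNReal.ofReal_mul (by norm_num),
      ← ENNReal.ofReal_mul (by norm_num), rpow_neg hh.le, rpow_two]
    congr 1
    field_simp
    norm_num
  rw [uniformS2, Measure.smul_apply, smul_eq_mul, mul_assoc]
  gcongr
  exact hcap.trans h96.le

theorem exists_prod_setOf_angle_le_two_div_le :
    ∃ C < ∞, ∀ d : E3, ‖d‖ = 1 →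
      ((volume.restrict (Ioi (0 : ℝ))).prod uniformS2)
        {q : ℝ × S2 | angle d q.2 ≤ 2 / q.1} ≤ C := by
  refine ⟨1 + ((volume : Measure E3).toSphere univ)⁻¹ * 96, ?_, fun d hd => ?_⟩
  · have hne : (volume : Measure E3).toSphere univ ≠ 0 :=
      Measure.measure_univ_ne_zero.2 (NeZero.ne _)
    exact ENNReal.add_lt_top.2 ⟨ENNReal.one_lt_top,
      ENNReal.mul_lt_top (ENNReal.inv_lt_top.2 (pos_iff_ne_zero.2 hne)) (by norm_num)⟩
  · rw [Measure.prod_apply (measurableSet_le (by fun_prop) (by fun_prop))]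
    exact setLIntegral_Ioi_zero_le_of_le_rpow_neg_two (fun _ => prob_le_one)
      fun h hh => uniformS2_setOf_angle_le_two_div_le hd (one_pos.trans hh)

theorem map_lamD_eq_prod :
    lamD.map (fun p => (p.2.1, p.1)) = (volume.restrict (Ioi (0 : ℝ))).prod uniformS2 := by
  have hfst :
      lamD.map (Prod.map id Prod.fst) = uniformS2.prod (volume.restrict (Ioi (0 : ℝ))) := by
    rw [lamD, ← Measure.map_prod_map _ _ measurable_id measurable_fst, Measure.map_id,
      Measure.map_fst_prod, measure_univ, one_smul]
  rw [← Measure.prod_swap, ← hfst, Measure.map_map measurable_swap (by fun_prop)]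
  rfl

/-- the sets `Â' = {(u,h,v) : ∠(−e,u) ≤ 2/h}` and
`Ã' = {(u,h,v) : ∠(−u,v) ≤ 2/h}` have finite `λ`-measure. -/
theorem stmt_2 (e : S2) :
    lamD {p : S2 × ℝ × S2 | angle (-(e : E3)) (p.1 : E3) ≤ 2 / p.2.1} < ⊤ ∧
    lamD {p : S2 × ℝ × S2 | angle (-(p.1 : E3)) (p.2.2 : E3) ≤ 2 / p.2.1} < ⊤ := by
  obtain ⟨C, hC, hcap⟩ := exists_prod_setOf_angle_le_two_div_le
  have hneg : ∀ u : S2, ‖-(u : E3)‖ = 1 := by simp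
  constructor
  · calc _ = (lamD.map fun p => (p.2.1, p.1)) {q : ℝ × S2 | angle (-(e : E3)) q.2 ≤ 2 / q.1} :=
          (Measure.map_apply (by fun_prop) (measurableSet_le (by fun_prop) (by fun_prop))).symm
      _ ≤ C := map_lamD_eq_prod ▸ hcap _ (hneg e)
      _ < ⊤ := hC
  · calc _ = ∫⁻ u, ((volume.restrict (Ioi (0 : ℝ))).prod uniformS2)
            {q : ℝ × S2 | angle (-(u : E3)) q.2 ≤ 2 / q.1} ∂uniformS2 :=
          Measure.prod_apply (measurableSet_le (by fun_prop) (by fun_prop))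
      _ ≤ ∫⁻ _, C ∂uniformS2 := lintegral_mono fun u => hcap _ (hneg u)
      _ = C := by simp
      _ < ⊤ := hC

end
end

section
/- Let e ∈ S², and let λ be the measure (uniform on S²) × (Lebesgue on ℝ₊) on S² × ℝ₊. There is a constant C < ∞ such that for every s > 0, λ({(u,h) : ∠(−e,u) ≤ min{s, 2/h}}) ≤ C·s. -/
open MeasureTheory ProbabilityTheory InnerProductGeometry Real Set
open scoped ENNReal NNReal Pointwise

noncomputable section

lemma cone_vol_bound (e' : E3) (he : ‖e'‖ = 1) {θ : ℝ} (hθ : 0 ≤ θ) :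
    (volume : Measure E3) (Ioo (0:ℝ) 1 • (Subtype.val '' {u : S2 | angle e' (u:E3) ≤ θ}))
      ≤ ENNReal.ofReal (8 * θ^2) := by
  classical
  have hcard : Module.finrank ℝ E3 = Fintype.card (Fin 3) := by
    simp [finrank_euclideanSpace]
  have horth : Orthonormal ℝ (Set.restrict ({0} : Set (Fin 3)) (fun _ => e')) := by
    rw [orthonormal_iff_ite]
    intro i j
    have : i = j := Subtype.ext (by
      have hi := i.2; have hj := j.2
      simp only [Set.mem_singleton_iff] at hi hj
      rw [hi, hj])
    subst this
    simp only [Set.restrict_apply, if_pos rfl]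
    rw [real_inner_self_eq_norm_sq]; show ‖e'‖ ^ 2 = _; simp [he]
  obtain ⟨b, hb⟩ := horth.exists_orthonormalBasis_extension_of_card_eq hcard
  have hb0 : b 0 = e' := hb 0 rfl
  set I : Fin 3 → Set ℝ := ![Icc (-1) 1, Icc (-θ) θ, Icc (-θ) θ] with hI
  set B : Set (EuclideanSpace ℝ (Fin 3)) :=
    ((MeasurableEquiv.toLp 2 (Fin 3 → ℝ)).symm) ⁻¹' (Set.univ.pi I) with hB
  have hBmeas : MeasurableSet B :=
    ((MeasurableEquiv.toLp 2 (Fin 3 → ℝ)).symm).measurable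
      (MeasurableSet.univ_pi (fun i => by fin_cases i <;> exact measurableSet_Icc))
  have hsub : (Ioo (0:ℝ) 1 • (Subtype.val '' {u : S2 | angle e' (u:E3) ≤ θ}))
      ⊆ b.repr ⁻¹' B := by
    rintro x hx
    rw [Set.mem_smul] at hx
    obtain ⟨r, hr, v, hv, rfl⟩ := hx
    obtain ⟨u, hu, rfl⟩ := hv
    have hv1 : ‖(u : E3)‖ = 1 := by
      have := u.2; rwa [mem_sphere_zero_iff_norm] at this
    set a : ℝ := angle e' (u : E3) with ha
    have ha0 : 0 ≤ a := angle_nonneg _ _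
    have haπ : a ≤ π := angle_le_pi _ _
    have haθ : a ≤ θ := hu
    set y : EuclideanSpace ℝ (Fin 3) := b.repr (u : E3) with hy
    have hy0 : y 0 = Real.cos a := by
      rw [hy, b.repr_apply_apply, hb0, ha, cos_angle, he, hv1]
      simp
    have hynorm : (y 0)^2 + (y 1)^2 + (y 2)^2 = 1 := by
      have h1 : ‖y‖ = 1 := by rw [hy, b.repr.norm_map, hv1]
      have h2 : ‖y‖^2 = ∑ i, ‖y i‖^2 := by
        rw [EuclideanSpace.norm_eq]
        rw [Real.sq_sqrt (by positivity)]
      rw [h1, Fin.sum_univ_three] at h2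
      simp only [Real.norm_eq_abs, sq_abs] at h2
      linarith
    have hsin : Real.sin a ≤ θ := le_trans (Real.sin_le ha0) haθ
    have hsin0 : 0 ≤ Real.sin a := Real.sin_nonneg_of_nonneg_of_le_pi ha0 haπ
    have hsq : (y 1)^2 + (y 2)^2 = Real.sin a ^ 2 := by
      rw [Real.sin_sq]
      rw [hy0] at hynorm
      linarith
    have hy1 : |y 1| ≤ θ := by nlinarith [sq_abs (y 1), abs_nonneg (y 1), sq_nonneg (y 2)]
    have hy2 : |y 2| ≤ θ := by nlinarith [sq_abs (y 2), abs_nonneg (y 2), sq_nonneg (y 1)]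
    have hy0' : |y 0| ≤ 1 := by
      rw [hy0]; exact Real.abs_cos_le_one a
    have hrepr : b.repr (r • (u : E3)) = r • y := by rw [hy, _root_.map_smul]
    simp only [Set.mem_preimage, hB]
    intro i _
    have hcoord : ((MeasurableEquiv.toLp 2 (Fin 3 → ℝ)).symm) (b.repr (r • (u:E3))) i = r * y i := by
      rw [hrepr]; rfl
    have hr0 : 0 < r := hr.1
    have hr1 : r < 1 := hr.2
    have habs : ∀ c : ℝ, 0 ≤ c → |y i| ≤ c → ((MeasurableEquiv.toLp 2 (Fin 3 → ℝ)).symm)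
        (b.repr (r • (u:E3))) i ∈ Icc (-c) c := by
      intro c hc hyc
      rw [hcoord, Set.mem_Icc, ← abs_le, abs_mul, abs_of_pos hr0]
      calc r * |y i| ≤ 1 * |y i| := by nlinarith [abs_nonneg (y i)]
        _ ≤ c := by rw [one_mul]; exact hyc
    fin_cases i
    · exact habs 1 zero_le_one hy0'
    · exact habs θ hθ hy1
    · exact habs θ hθ hy2
  calc (volume : Measure E3) (Ioo (0:ℝ) 1 • (Subtype.val '' {u : S2 | angle e' (u:E3) ≤ θ}))
      ≤ volume (b.repr ⁻¹' B) := measure_mono hsub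
    _ = volume B := b.measurePreserving_repr.measure_preimage hBmeas.nullMeasurableSet
    _ = volume (Set.univ.pi I) :=
        (EuclideanSpace.volume_preserving_symm_measurableEquiv_toLp (Fin 3)).measure_preimage
          (MeasurableSet.univ_pi (fun i => by fin_cases i <;> exact measurableSet_Icc)).nullMeasurableSet
    _ = ∏ i, volume (I i) := by rw [volume_pi_pi]
    _ = ENNReal.ofReal (8 * θ^2) := by
        rw [Fin.prod_univ_three]
        simp only [hI, Matrix.cons_val_zero, Matrix.cons_val_one, Matrix.head_cons,
          Matrix.cons_val_two, Matrix.tail_cons, Real.volume_Icc]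
        rw [← ENNReal.ofReal_mul (by norm_num), ← ENNReal.ofReal_mul (by nlinarith)]
        congr 1; ring

lemma cap_measurable (e' : E3) (θ : ℝ) :
    MeasurableSet {u : S2 | angle e' (u:E3) ≤ θ} := by
  have h1 : Measurable fun v : E3 => angle e' v := by
    unfold InnerProductGeometry.angle
    exact Real.continuous_arccos.measurable.comp
      ((continuous_const.inner continuous_id).measurable.div
        (continuous_const.mul continuous_norm).measurable)
  exact (h1.comp continuous_subtype_val.measurable) measurableSet_Iic

lemma cap_bound :
    ∃ c : ℝ, 0 ≤ c ∧ ∀ (e' : E3), ‖e'‖ = 1 → ∀ θ : ℝ, 0 ≤ θ →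
      uniformS2 {u : S2 | angle e' (u:E3) ≤ θ} ≤ ENNReal.ofReal (c * θ^2) := by
  set r : ℝ≥0∞ := ((volume : Measure E3).toSphere Set.univ)⁻¹ with hr
  have hfin : r ≠ ∞ := by
    rw [hr, Ne, ENNReal.inv_eq_top, Measure.toSphere_apply_univ]
    refine mul_ne_zero ?_ ?_
    · simp [finrank_euclideanSpace]
    · exact (Metric.measure_ball_pos _ _ one_pos).ne'
  refine ⟨24 * r.toReal, by positivity, fun e' he θ hθ => ?_⟩
  have hdim : (Module.finrank ℝ E3 : ℝ≥0∞) = 3 := by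
    simp [finrank_euclideanSpace]
  have h1 : uniformS2 {u : S2 | angle e' (u:E3) ≤ θ}
      = r * (volume : Measure E3).toSphere {u : S2 | angle e' (u:E3) ≤ θ} := by
    rw [uniformS2, Measure.smul_apply, smul_eq_mul]
  rw [h1, Measure.toSphere_apply' _ (cap_measurable e' θ)]
  calc r * ((Module.finrank ℝ E3 : ℝ≥0∞)
        * volume (Ioo (0:ℝ) 1 • (Subtype.val '' {u : S2 | angle e' (u:E3) ≤ θ})))
      ≤ r * (3 * ENNReal.ofReal (8 * θ^2)) := by
        rw [hdim]
        exact mul_le_mul_right (mul_le_mul_right (cone_vol_bound e' he hθ) _) _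
    _ = ENNReal.ofReal r.toReal * ENNReal.ofReal (24 * θ^2) := by
        rw [ENNReal.ofReal_toReal hfin]
        congr 1
        rw [show (3:ℝ≥0∞) = ENNReal.ofReal 3 by simp,
          ← ENNReal.ofReal_mul (by norm_num)]
        congr 1; ring
    _ = ENNReal.ofReal (24 * r.toReal * θ^2) := by
        rw [← ENNReal.ofReal_mul ENNReal.toReal_nonneg]
        congr 1; ring

instance : IsFiniteMeasure uniformS2 := by
  constructor
  rw [uniformS2, Measure.smul_apply, smul_eq_mul]
  exact lt_of_le_of_lt (ENNReal.inv_mul_le_one _) ENNReal.one_lt_top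

/-- `λ({(u,h) : ∠(−e,u) ≤ min{s, 2/h}}) ≤ C·s`. -/
theorem stmt_3 (e : S2) :
    ∃ C : ℝ, ∀ s : ℝ, 0 < s →
      (uniformS2.prod (volume.restrict (Set.Ioi (0:ℝ))))
          {p : S2 × ℝ | angle (-(e : E3)) (p.1 : E3) ≤ min s (2 / p.2)}
        ≤ ENNReal.ofReal (C * s) := by

  obtain ⟨c, hc0, hcap⟩ := cap_bound
  set e' : E3 := -(e : E3) with he'
  have he'1 : ‖e'‖ = 1 := by
    rw [he', norm_neg]
    exact mem_sphere_zero_iff_norm.mp e.2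
  refine ⟨6 * c, fun s hs => ?_⟩
  have h2cs : (0:ℝ) ≤ 2 * c * s := by positivity
  set cap : ℝ → Set S2 := fun θ => {u : S2 | angle e' (u:E3) ≤ θ} with hcapdef
  set A : Set (S2 × ℝ) := cap s ×ˢ Ioc 0 (2/s) with hA
  set Bk : ℕ → Set (S2 × ℝ) :=
    fun k => cap (s / 2^k) ×ˢ Ico (2^k * (2/s)) (2^(k+1) * (2/s)) with hBk
  have hprodeq : uniformS2.prod (volume.restrict (Ioi (0:ℝ)))
      = (uniformS2.prod volume).restrict (univ ×ˢ Ioi 0) := by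
    rw [← Measure.prod_restrict, Measure.restrict_univ]
  have hincl : {p : S2 × ℝ | angle e' (p.1 : E3) ≤ min s (2 / p.2)} ∩ (univ ×ˢ Ioi 0)
      ⊆ A ∪ ⋃ k, Bk k := by
    rintro ⟨u, h⟩ ⟨hS, -, hh⟩
    simp only [Set.mem_setOf_eq] at hS
    have hh0 : (0:ℝ) < h := hh
    by_cases hc2 : h ≤ 2 / s
    · exact Or.inl ⟨hS.trans (min_le_left _ _), hh0, hc2⟩
    · right
      push_neg at hc2
      rw [div_lt_iff₀ hs] at hc2
      have ht1 : (1:ℝ) ≤ h * s / 2 := by linarith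
      obtain ⟨k, hk1, hk2⟩ := exists_nat_pow_near ht1 (one_lt_two (α := ℝ))
      have hpk : (0:ℝ) < 2^k := by positivity
      refine Set.mem_iUnion.2 ⟨k, ?_, ?_, ?_⟩
      · show angle e' (u:E3) ≤ s / 2^k
        refine (hS.trans (min_le_right _ _)).trans ?_
        rw [div_le_div_iff₀ hh0 hpk]
        nlinarith
      · show (2:ℝ)^k * (2/s) ≤ h
        rw [show (2:ℝ)^k * (2/s) = (2^k * 2)/s by ring, div_le_iff₀ hs]
        nlinarith
      · show h < (2:ℝ)^(k+1) * (2/s)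
        rw [show (2:ℝ)^(k+1) * (2/s) = (2^(k+1) * 2)/s by ring, lt_div_iff₀ hs]
        nlinarith
  have hAle : (uniformS2.prod volume) A ≤ ENNReal.ofReal (2*c*s) := by
    rw [hA, Measure.prod_prod, Real.volume_Ioc, sub_zero]
    refine le_trans (mul_le_mul_left (hcap e' he'1 s hs.le) _) ?_
    rw [← ENNReal.ofReal_mul (by positivity)]
    apply ENNReal.ofReal_le_ofReal
    rw [show c * s^2 * (2/s) = 2*c*s * (s/s) by ring, div_self hs.ne', mul_one]
  have hBle : ∀ k, (uniformS2.prod volume) (Bk k)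
      ≤ ENNReal.ofReal (2*c*s) * (2⁻¹ : ℝ≥0∞)^k := by
    intro k
    have hpk : (0:ℝ) < 2^k := by positivity
    rw [hBk, Measure.prod_prod, Real.volume_Ico]
    refine le_trans (mul_le_mul_left (hcap e' he'1 (s/2^k) (by positivity)) _) ?_
    rw [← ENNReal.ofReal_mul (by positivity)]
    have heq : c * (s/2^k)^2 * (2^(k+1) * (2/s) - 2^k * (2/s)) = (2*c*s) * (1/2)^k := by
      rw [one_div_pow]; field_simp
      ring
    rw [heq, ENNReal.ofReal_mul h2cs, ENNReal.ofReal_pow (by norm_num)]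
    congr 2
    rw [one_div, ENNReal.ofReal_inv_of_pos (by norm_num : (0:ℝ) < 2)]
    norm_num
  calc (uniformS2.prod (volume.restrict (Ioi (0:ℝ))))
        {p : S2 × ℝ | angle e' (p.1 : E3) ≤ min s (2 / p.2)}
      = (uniformS2.prod volume)
          ({p : S2 × ℝ | angle e' (p.1 : E3) ≤ min s (2 / p.2)} ∩ (univ ×ˢ Ioi 0)) := by
        rw [hprodeq, Measure.restrict_apply' (MeasurableSet.univ.prod measurableSet_Ioi)]
    _ ≤ (uniformS2.prod volume) (A ∪ ⋃ k, Bk k) := measure_mono hincl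
    _ ≤ (uniformS2.prod volume) A + ∑' k, (uniformS2.prod volume) (Bk k) :=
        (measure_union_le _ _).trans (add_le_add_right (measure_iUnion_le _) _)
    _ ≤ ENNReal.ofReal (2*c*s) + ∑' k, ENNReal.ofReal (2*c*s) * (2⁻¹ : ℝ≥0∞)^k :=
        add_le_add hAle (ENNReal.tsum_le_tsum hBle)
    _ = ENNReal.ofReal (2*c*s) + ENNReal.ofReal (2*c*s) * 2 := by
        rw [ENNReal.tsum_mul_left, ENNReal.tsum_geometric, ENNReal.one_sub_inv_two, inv_inv]
    _ ≤ ENNReal.ofReal (6 * c * s) := by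
        rw [show ENNReal.ofReal (2*c*s) * 2 = ENNReal.ofReal (4*c*s) by
            rw [show (4*c*s:ℝ) = (2*c*s)*2 by ring, ENNReal.ofReal_mul h2cs]; norm_num,
          ← ENNReal.ofReal_add h2cs (by positivity)]
        apply ENNReal.ofReal_le_ofReal
        linarith
end
end

section
/- In ℝ³, let K(dx) := C₁·min{1, |x|⁻¹} dx and L(dx) := C₂·e^{−c|x|}·|x|⁻² dx with constants C₁, C₂ < ∞, c > 0. Then there exists C < ∞ such that for all r ∈ (0,1): Σ_{z ∈ ℤ³} K(B(zr, 3r))·L(B(zr, 2r)) ≤ C·r³ and Σ_{z ∈ ℤ³} L(B(zr, 3r))·L(B(zr, 2r)) ≤ C·r². -/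
open MeasureTheory ProbabilityTheory InnerProductGeometry Real Set
open scoped ENNReal NNReal

noncomputable section

/-- The measure `K(dx) = C₁·min{1,|x|⁻¹} dx` on `ℝ³`. -/
noncomputable def measK (C₁ : ℝ) : Measure E3 :=
  volume.withDensity fun x => ENNReal.ofReal (C₁ * min 1 ‖x‖⁻¹)

/-- The measure `L(dx) = C₂·e^{−c|x|}|x|⁻² dx` on `ℝ³`. -/
noncomputable def measL (C₂ c : ℝ) : Measure E3 :=
  volume.withDensity fun x => ENNReal.ofReal (C₂ * Real.exp (-c * ‖x‖) * (‖x‖ ^ 2)⁻¹)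

/-- The measure `M(dx) = C₃·e^{−c|x|} dx` on `ℝ³`. -/
noncomputable def measM (C₃ c : ℝ) : Measure E3 :=
  volume.withDensity fun x => ENNReal.ofReal (C₃ * Real.exp (-c * ‖x‖))

/-- The scaled lattice point `z·r ∈ ℝ³` for `z ∈ ℤ³`. -/
noncomputable def latPt (r : ℝ) (z : Fin 3 → ℤ) : E3 :=
  (WithLp.equiv 2 (Fin 3 → ℝ)).symm fun i => (z i : ℝ) * r

/-! The density of `K` is bounded, so `K(B(zr,3r)) ≲ r³`, while the balls `B(zr,3r)` cover
every point at most `7³` times, so `∑_z L(B(zr,2r)) ≤ 343·L(ℝ³) < ∞` once `c > 0`.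

For the second sum, `L ≤ C₂|x|⁻² dx`. In `ℝ³` the weight `|x|⁻²` cancels the Jacobian `y²` of
polar coordinates, so `|x|⁻² dx` pushes forward to `3|B₁| dy` on `(0,∞)`. Hence a ball of
radius `ρ` has `|x|⁻²`-mass `≲ ρ³ / max(ρ,|x|)²` for each of its points `x` (compare with a
ball at the origin when `x` is near `0`, bound the density by `4/|x|²` otherwise). Integrating
this bound over the ball, summing over `z` with bounded overlap, and using
`∫₀^∞ max(ρ,y)⁻² dy = 2/ρ` gives `∑_z L(B(zr,3r))² ≲ r³ · r⁻¹ = r²`. -/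

open Metric Module

section Polar

variable {E : Type*} [NormedAddCommGroup E] [NormedSpace ℝ E] [FiniteDimensional ℝ E]
  [Nontrivial E] [MeasurableSpace E] [BorelSpace E] (μ : Measure E) [μ.IsAddHaarMeasure]

theorem lintegral_fun_norm_addHaar {f : ℝ → ℝ≥0∞} (hf : Measurable f) :
    ∫⁻ x, f ‖x‖ ∂μ = finrank ℝ E * μ (ball 0 1) *
      ∫⁻ y in Ioi 0, ENNReal.ofReal (y ^ (finrank ℝ E - 1)) * f y :=
  calc ∫⁻ x, f ‖x‖ ∂μ = ∫⁻ x : ({0}ᶜ : Set E), f ‖x.1‖ ∂μ.comap (↑) := by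
        rw [lintegral_subtype_comap (measurableSet_singleton _).compl fun x ↦ f ‖x‖,
          restrict_compl_singleton]
    _ = ∫⁻ p, f p.2 ∂μ.toSphere.prod (.volumeIoiPow (finrank ℝ E - 1)) := by
        simpa using μ.measurePreserving_homeomorphUnitSphereProd.lintegral_comp_emb
          (Homeomorph.measurableEmbedding _) (f ∘ Subtype.val ∘ Prod.snd)
    _ = μ.toSphere univ * ∫⁻ y, f y ∂.volumeIoiPow (finrank ℝ E - 1) := by
        rw [lintegral_prod (fun p : sphere (0 : E) 1 × Ioi (0 : ℝ) ↦ f p.2)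
          (hf.comp (measurable_subtype_coe.comp measurable_snd)).aemeasurable]
        simp only [lintegral_const, mul_comm]
    _ = _ := by
        rw [Measure.toSphere_apply_univ, Measure.volumeIoiPow,
          lintegral_withDensity_eq_lintegral_mul _ (by fun_prop)
            (g := fun y : Ioi (0 : ℝ) ↦ f y) (hf.comp measurable_subtype_coe),
          ← lintegral_subtype_comap measurableSet_Ioi]
        rfl

end Polar

theorem le_ofReal_mul_of_le_mul {x A : ℝ≥0∞} {C t : ℝ} (hA : A ≠ ⊤) (hC : A.toReal ≤ C)
    (ht : 0 ≤ t) (h : x ≤ A * ENNReal.ofReal t) : x ≤ ENNReal.ofReal (C * t) := by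
  rw [← ENNReal.ofReal_toReal hA, ← ENNReal.ofReal_mul ENNReal.toReal_nonneg] at h
  exact h.trans (ENNReal.ofReal_le_ofReal (mul_le_mul_of_nonneg_right hC ht))

theorem lintegral_Ioi_inv_max_sq {ρ : ℝ} (hρ : 0 < ρ) :
    ∫⁻ y in Ioi 0, ENNReal.ofReal ((max ρ y ^ 2)⁻¹) = ENNReal.ofReal (2 / ρ) := by
  rw [← Ioc_union_Ioi_eq_Ioi hρ.le, lintegral_union measurableSet_Ioi Ioc_disjoint_Ioi_same]
  have hnear :
      ∫⁻ y in Ioc 0 ρ, ENNReal.ofReal ((max ρ y ^ 2)⁻¹) = ENNReal.ofReal (1 / ρ) := by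
    rw [setLIntegral_congr_fun measurableSet_Ioc fun y (hy : y ∈ Ioc 0 ρ) ↦ by
        rw [max_eq_left hy.2], setLIntegral_const, Real.volume_Ioc, sub_zero,
      ← ENNReal.ofReal_mul (by positivity)]
    congr 1
    field_simp
  have hfar :
      ∫⁻ y in Ioi ρ, ENNReal.ofReal ((max ρ y ^ 2)⁻¹) = ENNReal.ofReal (1 / ρ) := by
    have hint : IntegrableOn (fun y : ℝ ↦ y ^ (-2 : ℝ)) (Ioi ρ) :=
      integrableOn_Ioi_rpow_of_lt (by norm_num) hρ
    rw [setLIntegral_congr_fun measurableSet_Ioi fun y (hy : ρ < y) ↦ by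
        rw [max_eq_right hy.le, ← Real.rpow_two, ← Real.rpow_neg (hρ.trans hy).le],
      ← ofReal_integral_eq_lintegral_ofReal hint ((ae_restrict_mem measurableSet_Ioi).mono
        fun y (hy : ρ < y) ↦ Real.rpow_nonneg (hρ.trans hy).le _),
      integral_Ioi_rpow_of_lt (by norm_num) hρ]
    norm_num [Real.rpow_neg_one]
  rw [hnear, hfar, ← ENNReal.ofReal_add (by positivity) (by positivity)]
  ring_nf

local notation "κ" => volume (ball (0 : E3) 1)

def measInvSq : Measure E3 := volume.withDensity fun x ↦ ENNReal.ofReal ((‖x‖ ^ 2)⁻¹)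

theorem lintegral_measInvSq_fun_norm {f : ℝ → ℝ≥0∞} (hf : Measurable f) :
    ∫⁻ x, f ‖x‖ ∂measInvSq = 3 * κ * ∫⁻ y in Ioi 0, f y := by
  rw [measInvSq, lintegral_withDensity_eq_lintegral_mul _ (by fun_prop) (by fun_prop)]
  simp only [Pi.mul_apply]
  rw [lintegral_fun_norm_addHaar volume (f := fun y ↦ ENNReal.ofReal ((y ^ 2)⁻¹) * f y)
    (by fun_prop)]
  simp only [finrank_euclideanSpace_fin, Nat.cast_ofNat, Nat.add_one_sub_one]
  congr 1
  refine setLIntegral_congr_fun measurableSet_Ioi fun y (hy : 0 < y) ↦ ?_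
  rw [← mul_assoc, ← ENNReal.ofReal_mul (by positivity), mul_inv_cancel₀ (by positivity),
    ENNReal.ofReal_one, one_mul]

theorem measInvSq_closedBall_zero (ρ : ℝ) :
    measInvSq (closedBall 0 ρ) = ENNReal.ofReal (3 * ρ) * κ := by
  have hind : (closedBall (0 : E3) ρ).indicator (1 : E3 → ℝ≥0∞) =
      fun x ↦ (Iic ρ).indicator 1 ‖x‖ := by
    ext x; simp [indicator]
  rw [← lintegral_indicator_one measurableSet_closedBall, hind,
    lintegral_measInvSq_fun_norm (measurable_one.indicator measurableSet_Iic),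
    lintegral_indicator_one measurableSet_Iic, Measure.restrict_apply measurableSet_Iic,
    Iic_inter_Ioi, Real.volume_Ioc, sub_zero, ENNReal.ofReal_mul (by norm_num)]
  simp only [ENNReal.ofReal_ofNat]
  ring

theorem measK_le_smul_volume (C₁ : ℝ) : measK C₁ ≤ ENNReal.ofReal C₁ • volume := by
  rw [measK, ← withDensity_const]
  refine withDensity_mono (ae_of_all _ fun x ↦ ?_)
  dsimp only
  rw [ENNReal.ofReal_mul' (le_min zero_le_one (by positivity))]
  exact mul_le_of_le_one_right' (ENNReal.ofReal_le_one.2 (min_le_left _ _))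

theorem measL_eq_withDensity (C₂ c : ℝ) :
    measL C₂ c = measInvSq.withDensity fun x ↦ ENNReal.ofReal (C₂ * exp (-c * ‖x‖)) := by
  rw [measL, measInvSq, ← withDensity_mul _ (by fun_prop) (by fun_prop)]
  congr 1 with x
  rw [Pi.mul_apply, ← ENNReal.ofReal_mul (by positivity), mul_comm]

theorem measL_le_smul_measInvSq (C₂ : ℝ) {c : ℝ} (hc : 0 ≤ c) :
    measL C₂ c ≤ ENNReal.ofReal C₂ • measInvSq := by
  rw [measL_eq_withDensity, ← withDensity_const]
  refine withDensity_mono (ae_of_all _ fun x ↦ ?_)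
  dsimp only
  rw [ENNReal.ofReal_mul' (exp_pos _).le]
  refine mul_le_of_le_one_right' (ENNReal.ofReal_le_one.2 (exp_le_one_iff.2 ?_))
  nlinarith [norm_nonneg x]

theorem isFiniteMeasure_measL (C₂ : ℝ) {c : ℝ} (hc : 0 < c) :
    IsFiniteMeasure (measL C₂ c) := by
  refine ⟨?_⟩
  rw [measL_eq_withDensity, withDensity_apply _ MeasurableSet.univ, Measure.restrict_univ,
    lintegral_measInvSq_fun_norm (f := fun y ↦ ENNReal.ofReal (C₂ * exp (-c * y)))
      (by fun_prop)]
  exact ENNReal.mul_lt_top (ENNReal.mul_lt_top (by norm_num) measure_ball_lt_top)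
    ((exp_neg_integrableOn_Ioi 0 hc).const_mul C₂).lintegral_lt_top

theorem mem_Icc_ceil_of_mem_closedBall_latPt {r : ℝ} (hr : 0 < r) {x : E3} {z : Fin 3 → ℤ}
    (hx : x ∈ closedBall (latPt r z) (3 * r)) :
    z ∈ Finset.Icc (fun i ↦ ⌈x i / r⌉ - 3) (fun i ↦ ⌈x i / r⌉ + 3) := by
  rw [Finset.mem_Icc]
  have hcoord (i : Fin 3) : |x i / r - z i| ≤ 3 := by
    have h := (PiLp.norm_apply_le (x - latPt r z) i).trans (mem_closedBall_iff_norm.1 hx)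
    rw [PiLp.sub_apply, Real.norm_eq_abs] at h
    rw [← mul_le_mul_iff_left₀ hr, ← abs_of_pos hr, ← abs_mul, abs_of_pos hr, sub_mul,
      div_mul_cancel₀ _ hr.ne']
    exact h
  refine ⟨fun i ↦ ?_, fun i ↦ ?_⟩ <;> have h := abs_le.1 (hcoord i)
  · have : ⌈x i / r⌉ ≤ z i + 3 := Int.ceil_le.2 (by push_cast; linarith)
    show ⌈x i / r⌉ - 3 ≤ z i
    omega
  · have : ((z i - 3 : ℤ) : ℝ) ≤ ⌈x i / r⌉ := by push_cast; linarith [Int.le_ceil (x i / r)]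
    show z i ≤ ⌈x i / r⌉ + 3
    have := Int.cast_le.1 this
    omega

theorem tsum_indicator_closedBall_latPt_le {r : ℝ} (hr : 0 < r) (φ : E3 → ℝ≥0∞) (x : E3) :
    ∑' z : Fin 3 → ℤ, (closedBall (latPt r z) (3 * r)).indicator φ x ≤ 343 * φ x := by
  set T := Finset.Icc (fun i ↦ ⌈x i / r⌉ - 3) (fun i ↦ ⌈x i / r⌉ + 3)
  have hT : T.card = 343 := by
    have h7 (a : ℤ) : (a + 3 + 1 - (a - 3)).toNat = 7 := by omega
    simp only [T, Pi.card_Icc, Int.card_Icc, h7]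
    rfl
  calc ∑' z, (closedBall (latPt r z) (3 * r)).indicator φ x
      ≤ ∑' z, if z ∈ T then φ x else 0 := ENNReal.tsum_le_tsum fun z ↦ by
        by_cases hx : x ∈ closedBall (latPt r z) (3 * r)
        · rw [indicator_of_mem hx, if_pos (mem_Icc_ceil_of_mem_closedBall_latPt hr hx)]
        · rw [indicator_of_notMem hx]; exact zero_le
    _ = 343 * φ x := by
      rw [tsum_eq_sum fun z hz ↦ if_neg hz, Finset.sum_ite_mem, Finset.inter_self,
        Finset.sum_const, hT, nsmul_eq_mul, Nat.cast_ofNat]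

theorem tsum_setLIntegral_closedBall_latPt_le (ν : Measure E3) {φ : E3 → ℝ≥0∞}
    (hφ : Measurable φ) {r : ℝ} (hr : 0 < r) :
    ∑' z : Fin 3 → ℤ, ∫⁻ x in closedBall (latPt r z) (3 * r), φ x ∂ν
      ≤ 343 * ∫⁻ x, φ x ∂ν := by
  simp_rw [← lintegral_indicator measurableSet_closedBall]
  rw [← lintegral_tsum fun z ↦ (hφ.indicator measurableSet_closedBall).aemeasurable,
    ← lintegral_const_mul _ hφ]
  exact lintegral_mono fun x ↦ tsum_indicator_closedBall_latPt_le hr φ x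

theorem tsum_measK_mul_le (C₁ : ℝ) (ν : Measure E3) {r : ℝ} (hr : 0 < r) :
    ∑' z : Fin 3 → ℤ,
        measK C₁ (closedBall (latPt r z) (3 * r)) * ν (closedBall (latPt r z) (2 * r))
      ≤ 27 * 343 * ENNReal.ofReal C₁ * κ * ν univ * ENNReal.ofReal (r ^ 3) := by
  have hK (z : Fin 3 → ℤ) : measK C₁ (closedBall (latPt r z) (3 * r))
      ≤ ENNReal.ofReal C₁ * (ENNReal.ofReal ((3 * r) ^ 3) * κ) := by
    refine (measK_le_smul_volume C₁ _).trans_eq ?_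
    rw [Measure.smul_apply, smul_eq_mul, Measure.addHaar_closedBall _ _ (by positivity),
      finrank_euclideanSpace_fin]
  have hν : ∑' z : Fin 3 → ℤ, ν (closedBall (latPt r z) (2 * r)) ≤ 343 * ν univ :=
    calc ∑' z : Fin 3 → ℤ, ν (closedBall (latPt r z) (2 * r))
        ≤ ∑' z : Fin 3 → ℤ, ∫⁻ _ in closedBall (latPt r z) (3 * r), 1 ∂ν :=
          ENNReal.tsum_le_tsum fun z ↦ by
            rw [setLIntegral_one]
            exact measure_mono (closedBall_subset_closedBall (by linarith))
      _ ≤ 343 * ∫⁻ _, 1 ∂ν := tsum_setLIntegral_closedBall_latPt_le ν measurable_const hr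
      _ = 343 * ν univ := by rw [lintegral_one]
  calc ∑' z : Fin 3 → ℤ,
        measK C₁ (closedBall (latPt r z) (3 * r)) * ν (closedBall (latPt r z) (2 * r))
      ≤ ∑' z : Fin 3 → ℤ, ENNReal.ofReal C₁ * (ENNReal.ofReal ((3 * r) ^ 3) * κ) *
          ν (closedBall (latPt r z) (2 * r)) :=
        ENNReal.tsum_le_tsum fun z ↦ by gcongr; exact hK z
    _ = ENNReal.ofReal C₁ * (ENNReal.ofReal ((3 * r) ^ 3) * κ) *
          ∑' z : Fin 3 → ℤ, ν (closedBall (latPt r z) (2 * r)) := ENNReal.tsum_mul_left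
    _ ≤ ENNReal.ofReal C₁ * (ENNReal.ofReal ((3 * r) ^ 3) * κ) * (343 * ν univ) := by gcongr
    _ = 27 * 343 * ENNReal.ofReal C₁ * κ * ν univ * ENNReal.ofReal (r ^ 3) := by
      rw [mul_pow, show (3 : ℝ) ^ 3 = 27 by norm_num, ENNReal.ofReal_mul (by norm_num),
        ENNReal.ofReal_ofNat]
      ring

theorem measInvSq_closedBall_le_norm_add (p : E3) (ρ : ℝ) :
    measInvSq (closedBall p ρ) ≤ ENNReal.ofReal (3 * (‖p‖ + ρ)) * κ :=
  (measure_mono (closedBall_subset_closedBall' (by rw [dist_zero_right, add_comm]))).trans_eq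
    (measInvSq_closedBall_zero _)

theorem measInvSq_closedBall_le_of_le_norm {p : E3} {ρ R : ℝ} (hρ : 0 ≤ ρ) (hR : 0 < R)
    (h : ∀ y ∈ closedBall p ρ, R ≤ ‖y‖) :
    measInvSq (closedBall p ρ) ≤ ENNReal.ofReal (ρ ^ 3 / R ^ 2) * κ :=
  calc measInvSq (closedBall p ρ) = ∫⁻ y in closedBall p ρ, ENNReal.ofReal ((‖y‖ ^ 2)⁻¹) :=
        withDensity_apply _ measurableSet_closedBall
    _ ≤ ∫⁻ _ in closedBall p ρ, ENNReal.ofReal ((R ^ 2)⁻¹) :=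
        setLIntegral_mono' measurableSet_closedBall fun y hy ↦
          ENNReal.ofReal_le_ofReal
            (inv_anti₀ (by positivity) (pow_le_pow_left₀ hR.le (h y hy) 2))
    _ = ENNReal.ofReal (ρ ^ 3 / R ^ 2) * κ := by
        rw [setLIntegral_const, Measure.addHaar_closedBall _ _ hρ, finrank_euclideanSpace_fin,
          ← mul_assoc, ← ENNReal.ofReal_mul (by positivity), div_eq_mul_inv, mul_comm (R ^ 2)⁻¹]

theorem measInvSq_closedBall_le {ρ : ℝ} (hρ : 0 < ρ) {p x : E3} (hx : x ∈ closedBall p ρ) :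
    measInvSq (closedBall p ρ)
      ≤ ENNReal.ofReal (288 * ρ ^ 3) * κ * ENNReal.ofReal ((max ρ ‖x‖ ^ 2)⁻¹) := by
  rw [mul_right_comm, ← ENNReal.ofReal_mul (by positivity)]
  rw [mem_closedBall_iff_norm] at hx
  rcases le_or_gt ‖x‖ (4 * ρ) with hnear | hfar
  · refine (measInvSq_closedBall_le_norm_add p ρ).trans ?_
    gcongr ENNReal.ofReal ?_ * _
    have hp : ‖p‖ ≤ ‖x‖ + ρ := by
      have := norm_sub_norm_le p x; rw [norm_sub_rev] at this; linarith
    have hm : ρ ≤ max ρ ‖x‖ := le_max_left _ _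
    have hm' : max ρ ‖x‖ ≤ 4 * ρ := max_le (by linarith) hnear
    rw [← div_eq_mul_inv, le_div_iff₀ (by positivity)]
    nlinarith [mul_le_mul hm' hm' (by positivity) (by positivity)]
  · have hfar' (y : E3) (hy : y ∈ closedBall p ρ) : ‖x‖ / 2 ≤ ‖y‖ := by
      rw [mem_closedBall_iff_norm] at hy
      have := norm_sub_norm_le x y
      have := norm_sub_le_norm_sub_add_norm_sub x p y
      rw [norm_sub_rev p y] at this
      linarith
    refine (measInvSq_closedBall_le_of_le_norm hρ.le (by linarith) hfar').trans ?_
    gcongr ENNReal.ofReal ?_ * _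
    rw [max_eq_right (by linarith), div_pow, div_div_eq_mul_div, ← div_eq_mul_inv]
    gcongr ?_ / _
    nlinarith [pow_pos hρ 3]

theorem measInvSq_closedBall_sq_le {ρ : ℝ} (hρ : 0 < ρ) (p : E3) :
    measInvSq (closedBall p ρ) ^ 2 ≤ ENNReal.ofReal (288 * ρ ^ 3) * κ *
      ∫⁻ x in closedBall p ρ, ENNReal.ofReal ((max ρ ‖x‖ ^ 2)⁻¹) ∂measInvSq :=
  calc measInvSq (closedBall p ρ) ^ 2
      = ∫⁻ _ in closedBall p ρ, measInvSq (closedBall p ρ) ∂measInvSq := by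
        rw [setLIntegral_const, sq]
    _ ≤ ∫⁻ x in closedBall p ρ,
          ENNReal.ofReal (288 * ρ ^ 3) * κ * ENNReal.ofReal ((max ρ ‖x‖ ^ 2)⁻¹) ∂measInvSq :=
        setLIntegral_mono (by fun_prop) fun _ hx ↦ measInvSq_closedBall_le hρ hx
    _ = _ := lintegral_const_mul _ (by fun_prop)

theorem tsum_measInvSq_closedBall_latPt_sq_le {r : ℝ} (hr : 0 < r) :
    ∑' z : Fin 3 → ℤ, measInvSq (closedBall (latPt r z) (3 * r)) ^ 2
      ≤ 343 * 15552 * κ ^ 2 * ENNReal.ofReal (r ^ 2) := by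
  have hρ : 0 < 3 * r := by positivity
  set w : E3 → ℝ≥0∞ := fun x ↦ ENNReal.ofReal ((max (3 * r) ‖x‖ ^ 2)⁻¹)
  have hw : ∫⁻ x, w x ∂measInvSq = 3 * κ * ENNReal.ofReal (2 / (3 * r)) := by
    rw [lintegral_measInvSq_fun_norm (f := fun y ↦ ENNReal.ofReal ((max (3 * r) y ^ 2)⁻¹))
      (by fun_prop), lintegral_Ioi_inv_max_sq hρ]
  have hconst : ENNReal.ofReal (288 * (3 * r) ^ 3) * ENNReal.ofReal (2 / (3 * r))
      = 5184 * ENNReal.ofReal (r ^ 2) := by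
    rw [← ENNReal.ofReal_mul (by positivity),
      show 288 * (3 * r) ^ 3 * (2 / (3 * r)) = 5184 * r ^ 2 by field_simp; ring,
      ENNReal.ofReal_mul (by norm_num), ENNReal.ofReal_ofNat]
  calc ∑' z : Fin 3 → ℤ, measInvSq (closedBall (latPt r z) (3 * r)) ^ 2
      ≤ ∑' z : Fin 3 → ℤ, ENNReal.ofReal (288 * (3 * r) ^ 3) * κ *
          ∫⁻ x in closedBall (latPt r z) (3 * r), w x ∂measInvSq :=
        ENNReal.tsum_le_tsum fun z ↦ measInvSq_closedBall_sq_le hρ _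
    _ = ENNReal.ofReal (288 * (3 * r) ^ 3) * κ *
          ∑' z : Fin 3 → ℤ, ∫⁻ x in closedBall (latPt r z) (3 * r), w x ∂measInvSq :=
        ENNReal.tsum_mul_left
    _ ≤ ENNReal.ofReal (288 * (3 * r) ^ 3) * κ * (343 * ∫⁻ x, w x ∂measInvSq) := by
        gcongr
        exact tsum_setLIntegral_closedBall_latPt_le _ (by fun_prop) hr
    _ = 343 * 3 * κ ^ 2 * (ENNReal.ofReal (288 * (3 * r) ^ 3) * ENNReal.ofReal (2 / (3 * r))) := by
        rw [hw]
        ring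
    _ = 343 * 15552 * κ ^ 2 * ENNReal.ofReal (r ^ 2) := by
        rw [hconst]
        ring

theorem tsum_measL_mul_le (C₂ : ℝ) {c : ℝ} (hc : 0 ≤ c) {r : ℝ} (hr : 0 < r) :
    ∑' z : Fin 3 → ℤ,
        measL C₂ c (closedBall (latPt r z) (3 * r)) * measL C₂ c (closedBall (latPt r z) (2 * r))
      ≤ ENNReal.ofReal C₂ ^ 2 * (343 * 15552 * κ ^ 2) * ENNReal.ofReal (r ^ 2) := by
  have hL (s : Set E3) : measL C₂ c s ≤ ENNReal.ofReal C₂ * measInvSq s :=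
    measL_le_smul_measInvSq C₂ hc s
  calc ∑' z : Fin 3 → ℤ,
        measL C₂ c (closedBall (latPt r z) (3 * r)) * measL C₂ c (closedBall (latPt r z) (2 * r))
      ≤ ∑' z : Fin 3 → ℤ,
          ENNReal.ofReal C₂ ^ 2 * measInvSq (closedBall (latPt r z) (3 * r)) ^ 2 :=
        ENNReal.tsum_le_tsum fun z ↦ by
          rw [← mul_pow, sq]
          exact mul_le_mul' (hL _) ((measure_mono
            (closedBall_subset_closedBall (by linarith))).trans (hL _))
    _ = ENNReal.ofReal C₂ ^ 2 *
          ∑' z : Fin 3 → ℤ, measInvSq (closedBall (latPt r z) (3 * r)) ^ 2 :=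
        ENNReal.tsum_mul_left
    _ ≤ _ := by
        rw [mul_assoc]
        gcongr
        exact tsum_measInvSq_closedBall_latPt_sq_le hr

theorem stmt_8_general (C₁ C₂ c : ℝ) (hc : 0 < c) :
    ∃ C : ℝ, ∀ r ∈ Set.Ioo (0:ℝ) 1,
      (∑' z : Fin 3 → ℤ,
          measK C₁ (Metric.closedBall (latPt r z) (3*r)) *
            measL C₂ c (Metric.closedBall (latPt r z) (2*r)))
        ≤ ENNReal.ofReal (C * r ^ 3) ∧
      (∑' z : Fin 3 → ℤ,
          measL C₂ c (Metric.closedBall (latPt r z) (3*r)) *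
            measL C₂ c (Metric.closedBall (latPt r z) (2*r)))
        ≤ ENNReal.ofReal (C * r ^ 2) := by
  have := isFiniteMeasure_measL C₂ hc
  set A := 27 * 343 * ENNReal.ofReal C₁ * κ * measL C₂ c univ
  set B := ENNReal.ofReal C₂ ^ 2 * (343 * 15552 * κ ^ 2)
  have hA : A ≠ ⊤ := by finiteness
  have hB : B ≠ ⊤ := by finiteness
  refine ⟨max A.toReal B.toReal, fun r ⟨hr, _⟩ ↦ ⟨?_, ?_⟩⟩
  · exact le_ofReal_mul_of_le_mul hA (le_max_left _ _) (by positivity)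
      (tsum_measK_mul_le C₁ (measL C₂ c) hr)
  · exact le_ofReal_mul_of_le_mul hB (le_max_right _ _) (by positivity)
      (tsum_measL_mul_le C₂ hc.le hr)

/-- `Σ_z K(B(zr,3r))·L(B(zr,2r)) ≤ C·r³` and `Σ_z L(B(zr,3r))·L(B(zr,2r)) ≤ C·r²`. -/
theorem stmt_8 (C₁ C₂ c : ℝ) (hC₁ : 0 ≤ C₁) (hC₂ : 0 ≤ C₂) (hc : 0 < c) :
    ∃ C : ℝ, ∀ r ∈ Set.Ioo (0:ℝ) 1,
      (∑' z : Fin 3 → ℤ,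
          measK C₁ (Metric.closedBall (latPt r z) (3*r)) *
            measL C₂ c (Metric.closedBall (latPt r z) (2*r)))
        ≤ ENNReal.ofReal (C * r ^ 3) ∧
      (∑' z : Fin 3 → ℤ,
          measL C₂ c (Metric.closedBall (latPt r z) (3*r)) *
            measL C₂ c (Metric.closedBall (latPt r z) (2*r)))
        ≤ ENNReal.ofReal (C * r ^ 2) :=
  stmt_8_general C₁ C₂ c hc
end
end

section
/- Fix a unit vector e ∈ S² ⊂ ℝ³ and let λ = (uniform on S²) × (Lebesgue on ℝ₊) × (uniform on S²) on 𝔻 = S² × ℝ₊ × S². There is a constant C < ∞ such that for all s ∈ (0, 1/2]: λ({(u,h,v) ∈ 𝔻 : ∠(−u,v) ≤ 2/h and |e·(u×v)| < 4s}) ≤ C·s·|log s|. -/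
open MeasureTheory ProbabilityTheory InnerProductGeometry Real Set
open scoped ENNReal NNReal

noncomputable section

/-!
Write `w = e × u`. By the triple product `e · (u × v) = v · w`, so for fixed `(u, h)` the admissible
`v` lie in the cap of angular radius `2/h` around `-u` and in the slab `|v · w| < 4s`. In an
orthonormal frame `(u, w/|w|, ·)` the cone over this set lies in a box, and the uniform measure of
a subset of `S²` is at most the volume of its cone in the unit ball, so the set has measure at most
`min(32s/|w|, 64s/(|w| h), 32/h²)`. Integrating over `h ∈ (0, 2]`, `(2, 2/s]`, `(2/s, ∞)` gives
`O(s |log s| / |e × u|)`, and `∫ du / |e × u|` is finite because `{u : |e × u| ≤ τ}` lies in a box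
of volume `8τ²`.
-/

open Filter Topology
open scoped RealInnerProductSpace Pointwise

section BoxVolume

variable {ι F : Type*} [Fintype ι] [NormedAddCommGroup F] [InnerProductSpace ℝ F]
  [FiniteDimensional ℝ F] [MeasurableSpace F] [BorelSpace F]

theorem OrthonormalBasis.volume_setOf_abs_inner_le (b : OrthonormalBasis ι ℝ F) (t : ι → ℝ) :
    volume {x : F | ∀ i, |⟪b i, x⟫| ≤ t i} = ∏ i, ENNReal.ofReal (2 * t i) := by
  have hbox : {x : F | ∀ i, |⟪b i, x⟫| ≤ t i}
      = b.repr ⁻¹' (WithLp.ofLp ⁻¹' univ.pi fun i => Icc (-t i) (t i)) := by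
    ext x
    simp only [mem_preimage, mem_univ_pi, mem_Icc, abs_le, b.repr_apply_apply]
    rfl
  have hm : MeasurableSet (univ.pi fun i => Icc (-t i) (t i)) :=
    .univ_pi fun _ => measurableSet_Icc
  rw [hbox, b.measurePreserving_repr.measure_preimage
      ((PiLp.volume_preserving_ofLp ι).measurable hm).nullMeasurableSet,
    (PiLp.volume_preserving_ofLp ι).measure_preimage hm.nullMeasurableSet, volume_pi_pi]
  simp only [Real.volume_Icc, sub_neg_eq_add, ← two_mul]

end BoxVolume

lemma one_le_volume_ball_E3 : 1 ≤ volume (Metric.ball (0 : E3) 1) := by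
  rw [EuclideanSpace.volume_ball_fin_three, ENNReal.ofReal_one, one_pow, one_mul,
    ← ENNReal.ofReal_one]
  exact ENNReal.ofReal_le_ofReal (by nlinarith [Real.pi_gt_three])

instance inst_s15 : IsProbabilityMeasure uniformS2 := by
  constructor
  have h := (volume : Measure E3).toSphere_apply_univ
  rw [uniformS2, Measure.smul_apply, smul_eq_mul, ENNReal.inv_mul_cancel]
  · rw [h]
    exact mul_ne_zero (by simp) (zero_lt_one.trans_le one_le_volume_ball_E3).ne'
  · exact measure_ne_top _ _

lemma uniformS2_le_volume_cone {A : Set S2} (hA : MeasurableSet A) :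
    uniformS2 A ≤ volume (Ioo (0 : ℝ) 1 • ((↑) '' A : Set E3)) := by
  rw [uniformS2, Measure.smul_apply, smul_eq_mul, ← ENNReal.div_eq_inv_mul,
    Measure.toSphere_apply_univ, Measure.toSphere_apply' _ hA,
    ENNReal.mul_div_mul_left _ _ (by simp) (by simp)]
  exact ENNReal.div_le_of_le_mul (le_mul_of_one_le_right zero_le one_le_volume_ball_E3)

lemma uniformS2_setOf_abs_inner_le (b : OrthonormalBasis (Fin 3) ℝ E3) (t : Fin 3 → ℝ) :
    uniformS2 {v : S2 | ∀ i, |⟪b i, (v : E3)⟫| ≤ t i} ≤ ∏ i, ENNReal.ofReal (2 * t i) := by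
  have hA : MeasurableSet {v : S2 | ∀ i, |⟪b i, (v : E3)⟫| ≤ t i} := by
    simp only [ofPred_forall]
    exact .iInter fun i => measurableSet_le (by fun_prop) measurable_const
  rw [← b.volume_setOf_abs_inner_le]
  refine (uniformS2_le_volume_cone hA).trans (measure_mono ?_)
  rintro _ ⟨r, hr, _, ⟨v, hv, rfl⟩, rfl⟩ i
  rw [real_inner_smul_right, abs_mul, abs_of_pos hr.1]
  exact (mul_le_of_le_one_left (abs_nonneg _) hr.2.le).trans (hv i)

lemma uniformS2_le_of_abs_inner_le (b : OrthonormalBasis (Fin 3) ℝ E3) {A : Set S2}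
    {t₁ t₂ : ℝ} (ht₁ : 0 ≤ t₁)
    (hA : ∀ v ∈ A, |⟪b 1, (v : E3)⟫| ≤ t₁ ∧ |⟪b 2, (v : E3)⟫| ≤ t₂) :
    uniformS2 A ≤ ENNReal.ofReal (8 * t₁ * t₂) := by
  refine (measure_mono fun v hv => ?_).trans
    ((uniformS2_setOf_abs_inner_le b ![1, t₁, t₂]).trans_eq ?_)
  · intro i
    fin_cases i
    · simpa [b.orthonormal.1 0, v.2] using abs_real_inner_le_norm (b 0) v
    · exact (hA v hv).1
    · exact (hA v hv).2
  · rw [Fin.prod_univ_three]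
    change ENNReal.ofReal (2 * 1) * ENNReal.ofReal (2 * t₁) * ENNReal.ofReal (2 * t₂) = _
    rw [← ENNReal.ofReal_mul (by norm_num), ← ENNReal.ofReal_mul (by positivity)]
    ring_nf

section InnerProductSpace

variable {V : Type*} [NormedAddCommGroup V] [InnerProductSpace ℝ V]

lemma norm_sub_le_angle {x y : V} (hx : ‖x‖ = 1) (hy : ‖y‖ = 1) : ‖x - y‖ ≤ angle x y := by
  have hcos := cos_angle_mul_norm_mul_norm x y
  rw [hx, hy, mul_one, mul_one] at hcos
  have hsq : ‖x - y‖ ^ 2 ≤ angle x y ^ 2 := by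
    rw [norm_sub_sq_real, hx, hy, ← hcos]
    nlinarith [Real.one_sub_sq_div_two_le_cos (x := angle x y)]
  exact (pow_le_pow_iff_left₀ (norm_nonneg _) (angle_nonneg x y) two_ne_zero).1 hsq

lemma abs_inner_le_angle {b x y : V} (hb : ‖b‖ = 1) (hbx : ⟪b, x⟫ = 0) (hx : ‖x‖ = 1)
    (hy : ‖y‖ = 1) : |⟪b, y⟫| ≤ angle x y :=
  calc |⟪b, y⟫| = |⟪b, x - y⟫| := by rw [inner_sub_right, hbx, zero_sub, abs_neg]
    _ ≤ ‖b‖ * ‖x - y‖ := abs_real_inner_le_norm _ _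
    _ ≤ angle x y := by rw [hb, one_mul]; exact norm_sub_le_angle hx hy

variable [FiniteDimensional ℝ V]

lemma exists_orthonormalBasis_fin_three_apply_zero (hV : Module.finrank ℝ V = 3) {u : V}
    (hu : ‖u‖ = 1) :
    ∃ b : OrthonormalBasis (Fin 3) ℝ V, b 0 = u := by
  have hv : Orthonormal ℝ (({0} : Set (Fin 3)).domRestrict fun _ => u) := by
    rw [orthonormal_iff_ite]
    rintro ⟨i, rfl⟩ ⟨j, rfl⟩
    simp [Set.domRestrict, hu]
  obtain ⟨b, hb⟩ := hv.exists_orthonormalBasis_extension_of_card_eq (by simpa using hV)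
  exact ⟨b, hb 0 rfl⟩

lemma exists_orthonormalBasis_fin_three_apply_zero_one (hV : Module.finrank ℝ V = 3) {u w : V}
    (hu : ‖u‖ = 1) (hw : ‖w‖ = 1) (huw : ⟪u, w⟫ = 0) :
    ∃ b : OrthonormalBasis (Fin 3) ℝ V, b 0 = u ∧ b 1 = w := by
  have hv : Orthonormal ℝ (({0, 1} : Set (Fin 3)).domRestrict ![u, w, u]) := by
    rw [orthonormal_iff_ite]
    rintro ⟨i, hi⟩ ⟨j, hj⟩
    simp only [mem_insert_iff, mem_singleton_iff] at hi hj
    rcases hi with rfl | rfl <;> rcases hj with rfl | rfl <;>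
      simp [Set.domRestrict, hu, hw, huw, real_inner_comm u w]
  obtain ⟨b, hb⟩ := hv.exists_orthonormalBasis_extension_of_card_eq (by simpa using hV)
  exact ⟨b, hb 0 (by simp), hb 1 (by simp)⟩

end InnerProductSpace

lemma inner_cross3 (x y z : E3) :
    ⟪x, cross3 y z⟫ = WithLp.ofLp x ⬝ᵥ crossProduct (WithLp.ofLp y) (WithLp.ofLp z) := by
  simp [cross3, EuclideanSpace.inner_eq_star_dotProduct, dotProduct_comm]

lemma inner_cross3_rotate (x y z : E3) : ⟪x, cross3 y z⟫ = ⟪z, cross3 x y⟫ := by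
  rw [inner_cross3, inner_cross3, triple_product_permutation, triple_product_permutation]

lemma inner_cross3_self_right (x y : E3) : ⟪y, cross3 x y⟫ = 0 := by
  rw [inner_cross3, dot_cross_self]

lemma norm_cross3_sq (x y : E3) : ‖cross3 x y‖ ^ 2 = ‖x‖ ^ 2 * ‖y‖ ^ 2 - ⟪x, y⟫ ^ 2 := by
  simp only [← real_inner_self_eq_norm_sq, EuclideanSpace.inner_eq_star_dotProduct, star_trivial,
    cross3, WithLp.equiv_apply, WithLp.equiv_symm_apply, cross_dot_cross]
  rw [dotProduct_comm (WithLp.ofLp y) (WithLp.ofLp x)]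
  ring

@[fun_prop]
lemma Continuous.cross3 {α : Type*} [TopologicalSpace α] {f g : α → E3} (hf : Continuous f)
    (hg : Continuous g) : Continuous fun x => cross3 (f x) (g x) := by
  refine (PiLp.continuous_toLp 2 _).comp (continuous_pi fun i => ?_)
  fin_cases i <;> simp [cross_apply] <;> fun_prop

lemma norm_cross3_le (x y : E3) : ‖cross3 x y‖ ≤ ‖x‖ * ‖y‖ := by
  refine (pow_le_pow_iff_left₀ (norm_nonneg _) (by positivity) two_ne_zero).1 ?_
  rw [norm_cross3_sq, mul_pow]
  nlinarith [sq_nonneg ⟪x, y⟫]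

lemma abs_inner_le_norm_cross3 (b : OrthonormalBasis (Fin 3) ℝ E3) (u : E3) {i : Fin 3}
    (hi : i ≠ 0) : |⟪b i, u⟫| ≤ ‖cross3 (b 0) u‖ := by
  have hbessel : ⟪b 0, u⟫ ^ 2 + ⟪b i, u⟫ ^ 2 ≤ ‖u‖ ^ 2 := by
    rw [← b.sum_sq_inner_right, ← Finset.sum_pair (f := fun j => ⟪b j, u⟫ ^ 2) hi.symm]
    exact Finset.sum_le_sum_of_subset_of_nonneg (Finset.subset_univ _) fun _ _ _ => sq_nonneg _
  refine abs_le_of_sq_le_sq ?_ (norm_nonneg _)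
  rw [norm_cross3_sq, b.orthonormal.1 0]
  linarith

lemma lintegral_Ioc_ofReal_div {a T B : ℝ} (ha : 0 < a) (haT : a ≤ T) (hB : 0 ≤ B) :
    ∫⁻ h in Ioc a T, ENNReal.ofReal (B / h) = ENNReal.ofReal (B * Real.log (T / a)) := by
  have hint : IntegrableOn (fun h : ℝ => B / h) (Ioc a T) :=
    (ContinuousOn.integrableOn_Icc (continuousOn_const.div continuousOn_id
      fun h hh => (ha.trans_le hh.1).ne')).mono_set Ioc_subset_Icc_self
  rw [← ofReal_integral_eq_lintegral_ofReal hint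
    ((ae_restrict_mem measurableSet_Ioc).mono fun h hh => div_nonneg hB (ha.trans hh.1).le),
    ← intervalIntegral.integral_of_le haT]
  simp only [div_eq_mul_inv B, intervalIntegral.integral_const_mul,
    integral_inv_of_pos ha (ha.trans_le haT)]

lemma lintegral_Ioi_ofReal_div_sq {T D : ℝ} (hT : 0 < T) (hD : 0 ≤ D) :
    ∫⁻ h in Ioi T, ENNReal.ofReal (D / h ^ 2) = ENNReal.ofReal (D / T) := by
  have hrpow : EqOn (fun h : ℝ => D / h ^ 2) (fun h => D * h ^ (-2 : ℝ)) (Ioi T) := fun h hh => by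
    dsimp only
    rw [Real.rpow_neg (hT.trans hh).le, div_eq_mul_inv, Real.rpow_two]
  have hint : IntegrableOn (fun h : ℝ => D * h ^ (-2 : ℝ)) (Ioi T) :=
    (integrableOn_Ioi_rpow_of_lt (by norm_num) hT).const_mul D
  rw [setLIntegral_congr_fun measurableSet_Ioi fun h hh => congrArg ENNReal.ofReal (hrpow hh),
    ← ofReal_integral_eq_lintegral_ofReal hint ((ae_restrict_mem measurableSet_Ioi).mono
      fun h hh => mul_nonneg hD (Real.rpow_nonneg (hT.trans hh).le _)),
    integral_const_mul, integral_Ioi_rpow_of_lt (by norm_num) hT]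
  norm_num [Real.rpow_neg_one, div_eq_mul_inv]

lemma setLIntegral_Ioi_zero_le_of_piecewise_le {F : ℝ → ℝ≥0∞} {a T A B D : ℝ} (ha : 0 < a)
    (haT : a ≤ T) (hB : 0 ≤ B) (hD : 0 ≤ D)
    (hF₁ : ∀ h ∈ Ioc 0 a, F h ≤ ENNReal.ofReal A)
    (hF₂ : ∀ h ∈ Ioc a T, F h ≤ ENNReal.ofReal (B / h))
    (hF₃ : ∀ h ∈ Ioi T, F h ≤ ENNReal.ofReal (D / h ^ 2)) :
    ∫⁻ h in Ioi 0, F h ≤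
      ENNReal.ofReal (A * a) + ENNReal.ofReal (B * Real.log (T / a)) + ENNReal.ofReal (D / T) := by
  rw [← Ioc_union_Ioi_eq_Ioi (ha.le.trans haT), ← Ioc_union_Ioc_eq_Ioc ha.le haT]
  refine (lintegral_union_le _ _ _).trans
    (add_le_add ((lintegral_union_le _ _ _).trans (add_le_add ?_ ?_)) ?_)
  · calc _ ≤ ∫⁻ _ in Ioc 0 a, ENNReal.ofReal A := setLIntegral_mono' measurableSet_Ioc hF₁
      _ = _ := by rw [setLIntegral_const, Real.volume_Ioc, sub_zero, ENNReal.ofReal_mul' ha.le]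
  · calc _ ≤ _ := setLIntegral_mono' measurableSet_Ioc hF₂
      _ = _ := lintegral_Ioc_ofReal_div ha haT hB
  · calc _ ≤ _ := setLIntegral_mono' measurableSet_Ioi hF₃
      _ = _ := lintegral_Ioi_ofReal_div_sq (ha.trans_le haT) hD

lemma uniformS2_norm_cross3_le {e : E3} (he : ‖e‖ = 1) {τ : ℝ} (hτ : 0 ≤ τ) :
    uniformS2 {u : S2 | ‖cross3 e u‖ ≤ τ} ≤ ENNReal.ofReal (8 * τ ^ 2) := by
  obtain ⟨b, rfl⟩ := exists_orthonormalBasis_fin_three_apply_zero (by simp) he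
  rw [sq, ← mul_assoc]
  exact uniformS2_le_of_abs_inner_le b hτ fun u hu =>
    ⟨(abs_inner_le_norm_cross3 b u (by decide)).trans hu,
      (abs_inner_le_norm_cross3 b u (by decide)).trans hu⟩

lemma uniformS2_cross3_eq_zero {e : E3} (he : ‖e‖ = 1) :
    uniformS2 {u : S2 | cross3 e u = 0} = 0 := by
  have hlim : Tendsto (fun τ : ℝ => ENNReal.ofReal (8 * τ ^ 2)) (𝓝[>] 0) (𝓝 0) := by
    have hcont : Continuous fun τ : ℝ => ENNReal.ofReal (8 * τ ^ 2) :=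
      ENNReal.continuous_ofReal.comp (by fun_prop)
    simpa using (hcont.tendsto 0).mono_left nhdsWithin_le_nhds
  refine le_antisymm (ge_of_tendsto hlim (eventually_nhdsWithin_of_forall
    fun τ (hτ : 0 < τ) => ?_)) zero_le
  calc uniformS2 {u : S2 | cross3 e u = 0}
      ≤ uniformS2 {u : S2 | ‖cross3 e u‖ ≤ τ} :=
        measure_mono fun u (hu : cross3 e u = 0) => by simp [hu, hτ.le]
    _ ≤ _ := uniformS2_norm_cross3_le he hτ.le

lemma lintegral_inv_norm_cross3_le {e : E3} (he : ‖e‖ = 1) :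
    ∫⁻ u, ENNReal.ofReal ‖cross3 e u‖⁻¹ ∂uniformS2 ≤ 9 := by
  rw [lintegral_eq_lintegral_meas_lt _ (.of_forall fun u => inv_nonneg.2 (norm_nonneg _))
    (by fun_prop)]
  -- split `(0, ∞)` at `1`, with an empty middle range `(1, 1]`
  refine (setLIntegral_Ioi_zero_le_of_piecewise_le (A := 1) (B := 0) (D := 8) one_pos le_rfl
    le_rfl (by norm_num) (fun t _ => ENNReal.ofReal_one ▸ prob_le_one)
    (fun t ht => absurd (ht.1.trans_le ht.2) (lt_irrefl 1)) fun t ht => ?_).trans (by norm_num)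
  have ht : (0 : ℝ) < t := one_pos.trans ht
  calc uniformS2 {u : S2 | t < ‖cross3 e u‖⁻¹}
      ≤ uniformS2 {u : S2 | ‖cross3 e u‖ ≤ t⁻¹} := measure_mono fun u (hu : t < _) =>
        ((lt_inv_comm₀ ht (inv_pos.1 (ht.trans hu))).1 hu).le
    _ ≤ ENNReal.ofReal (8 * t⁻¹ ^ 2) := uniformS2_norm_cross3_le he (inv_nonneg.2 ht.le)
    _ = ENNReal.ofReal (8 / t ^ 2) := by rw [inv_pow, ← div_eq_mul_inv]

def capSlab (u w : E3) (α τ : ℝ) : Set S2 :=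
  {v | angle (-u) v ≤ α ∧ |⟪w, (v : E3)⟫| ≤ τ}

lemma setOf_angle_inner_cross3_subset_capSlab (e u : E3) (α τ : ℝ) :
    {v : S2 | angle (-u) v ≤ α ∧ |⟪e, cross3 u v⟫| < τ} ⊆ capSlab u (cross3 e u) α τ :=
  fun v hv => ⟨hv.1, by rw [real_inner_comm, ← inner_cross3_rotate]; exact hv.2.le⟩

lemma uniformS2_capSlab_le {u w : E3} (hu : ‖u‖ = 1) (hw : w ≠ 0) (huw : ⟪u, w⟫ = 0)
    {α τ : ℝ} (hα : 0 ≤ α) (hτ : 0 ≤ τ) :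
    uniformS2 (capSlab u w α τ) ≤ ENNReal.ofReal (8 * τ / ‖w‖) ∧
      uniformS2 (capSlab u w α τ) ≤ ENNReal.ofReal (8 * τ * α / ‖w‖) ∧
      uniformS2 (capSlab u w α τ) ≤ ENNReal.ofReal (8 * α ^ 2) := by
  have hnw : 0 < ‖w‖ := norm_pos_iff.2 hw
  obtain ⟨b, hb₀, hb₁⟩ := exists_orthonormalBasis_fin_three_apply_zero_one (by simp) hu
    (w := ‖w‖⁻¹ • w) (by rw [norm_smul, norm_inv, norm_norm, inv_mul_cancel₀ hnw.ne'])
    (by rw [real_inner_smul_right, huw, mul_zero])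
  have hslab : ∀ v ∈ capSlab u w α τ, |⟪b 1, (v : E3)⟫| ≤ τ / ‖w‖ := by
    rintro v ⟨-, hv⟩
    rw [hb₁, real_inner_smul_left, abs_mul, abs_inv, abs_norm, inv_mul_eq_div]
    exact div_le_div_of_nonneg_right hv hnw.le
  have hcap : ∀ v ∈ capSlab u w α τ, ∀ i ≠ 0, |⟪b i, (v : E3)⟫| ≤ α := by
    rintro v ⟨hv, -⟩ i hi
    refine (abs_inner_le_angle (b.orthonormal.1 i) ?_ (by rw [norm_neg, hu]) (by simp)).trans hv
    rw [inner_neg_right, ← hb₀, b.orthonormal.2 hi, neg_zero]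
  have hunit : ∀ v : S2, |⟪b 2, (v : E3)⟫| ≤ 1 := fun v => by
    simpa [b.orthonormal.1 2] using abs_real_inner_le_norm (b 2) v
  refine ⟨?_, ?_, ?_⟩
  · refine (uniformS2_le_of_abs_inner_le b (by positivity)
      fun v hv => ⟨hslab v hv, hunit v⟩).trans_eq (congrArg ENNReal.ofReal (by ring))
  · refine (uniformS2_le_of_abs_inner_le b (by positivity)
      fun v hv => ⟨hslab v hv, hcap v hv 2 (by decide)⟩).trans_eq
      (congrArg ENNReal.ofReal (by ring))
  · refine (uniformS2_le_of_abs_inner_le b hα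
      fun v hv => ⟨hcap v hv 1 (by decide), hcap v hv 2 (by decide)⟩).trans_eq
      (congrArg ENNReal.ofReal (by ring))

lemma lintegral_uniformS2_capSlab_le {u w : E3} (hu : ‖u‖ = 1) (hw : w ≠ 0) (hw₁ : ‖w‖ ≤ 1)
    (huw : ⟪u, w⟫ = 0) {s : ℝ} (hs : 0 < s) (hs₁ : s ≤ 1) :
    ∫⁻ h in Ioi 0, uniformS2 (capSlab u w (2 / h) (4 * s)) ≤
      ENNReal.ofReal (s * (80 - 64 * Real.log s)) * ENNReal.ofReal ‖w‖⁻¹ := by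
  have hnw : 0 < ‖w‖ := norm_pos_iff.2 hw
  have hlog : Real.log s ≤ 0 := Real.log_nonpos hs.le hs₁
  have hbound := fun h (hh : (0 : ℝ) < h) =>
    uniformS2_capSlab_le hu hw huw (α := 2 / h) (τ := 4 * s) (by positivity) (by positivity)
  refine (setLIntegral_Ioi_zero_le_of_piecewise_le (a := 2) (T := 2 / s) (A := 32 * s / ‖w‖)
    (B := 64 * s / ‖w‖) (D := 32) two_pos ((le_div_iff₀ hs).2 (by linarith)) (by positivity)
    (by norm_num) (fun h hh => ?_) (fun h hh => ?_) (fun h hh => ?_)).trans ?_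
  · exact (hbound h hh.1).1.trans_eq (congrArg ENNReal.ofReal (by ring))
  · exact (hbound h (two_pos.trans hh.1)).2.1.trans_eq (congrArg ENNReal.ofReal (by ring))
  · exact (hbound h ((by positivity : (0 : ℝ) < 2 / s).trans hh)).2.2.trans_eq
      (congrArg ENNReal.ofReal (by ring))
  · have hq : 0 ≤ 64 * s / ‖w‖ * -Real.log s := mul_nonneg (by positivity) (neg_nonneg.2 hlog)
    rw [div_div_cancel_left' two_ne_zero, Real.log_inv, ← ENNReal.ofReal_add (by positivity) hq,
      ← ENNReal.ofReal_add (add_nonneg (by positivity) hq) (by positivity),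
      ← ENNReal.ofReal_mul (mul_nonneg hs.le (by linarith)), ← div_eq_mul_inv]
    refine ENNReal.ofReal_le_ofReal ?_
    have hsw : s ≤ s / ‖w‖ := le_div_self hs.le hnw hw₁
    have hdiff : 32 * s / ‖w‖ * 2 + 64 * s / ‖w‖ * -Real.log s + 32 / (2 / s)
        - s * (80 - 64 * Real.log s) / ‖w‖ = 16 * (s - s / ‖w‖) := by
      field_simp
      ring
    linarith

lemma lamD_apply {S : Set (S2 × ℝ × S2)} (hS : MeasurableSet S) :
    lamD S = ∫⁻ u, (∫⁻ h in Ioi (0 : ℝ), uniformS2 {v | (u, h, v) ∈ S}) ∂uniformS2 := by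
  rw [lamD, Measure.prod_apply hS]
  refine lintegral_congr fun u => ?_
  rw [Measure.prod_apply (measurable_prodMk_left hS)]
  rfl

lemma lamD_setOf_angle_inner_cross3_le {e : E3} (he : ‖e‖ = 1) {s : ℝ} (hs : 0 < s)
    (hs₁ : s ≤ 1) :
    lamD {p : S2 × ℝ × S2 | angle (-(p.1 : E3)) p.2.2 ≤ 2 / p.2.1 ∧
        |⟪e, cross3 p.1 p.2.2⟫| < 4 * s} ≤
      ENNReal.ofReal (s * (80 - 64 * Real.log s)) * 9 := by
  have hsection : ∀ᵐ u : S2 ∂uniformS2, ∫⁻ h in Ioi 0,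
      uniformS2 {v : S2 | angle (-(u : E3)) v ≤ 2 / h ∧ |⟪e, cross3 u v⟫| < 4 * s} ≤
      ENNReal.ofReal (s * (80 - 64 * Real.log s)) * ENNReal.ofReal ‖cross3 e u‖⁻¹ := by
    filter_upwards [ae_iff (p := fun u : S2 => cross3 e u ≠ 0) |>.2
      (by simpa using uniformS2_cross3_eq_zero he)] with u hu
    exact (lintegral_mono fun h => measure_mono (setOf_angle_inner_cross3_subset_capSlab ..)).trans
      (lintegral_uniformS2_capSlab_le (by simp) hu ((norm_cross3_le _ _).trans (by simp [he]))
        (inner_cross3_self_right _ _) hs hs₁)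
  refine (lamD_apply ?_).trans_le ?_
  · rw [ofPred_and]
    refine (measurableSet_le ?_ ?_).inter (measurableSet_lt ?_ ?_)
    · unfold angle
      fun_prop
    all_goals fun_prop
  calc _ ≤ ∫⁻ u, ENNReal.ofReal (s * (80 - 64 * Real.log s)) *
        ENNReal.ofReal ‖cross3 e u‖⁻¹ ∂uniformS2 := lintegral_mono_ae hsection
    _ = ENNReal.ofReal (s * (80 - 64 * Real.log s)) *
        ∫⁻ u, ENNReal.ofReal ‖cross3 e u‖⁻¹ ∂uniformS2 := lintegral_const_mul _ (by fun_prop)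
    _ ≤ _ := by gcongr; exact lintegral_inv_norm_cross3_le he

/-- `λ({(u,h,v) : ∠(−u,v) ≤ 2/h, |e·(u×v)| < 4s}) ≤ C·s·|log s|` for `s ∈ (0,1/2]`. -/
theorem stmt_15 (e : S2) :
    ∃ C : ℝ, ∀ s ∈ Set.Ioc (0:ℝ) (1/2),
      lamD {p : S2 × ℝ × S2 | angle (-(p.1 : E3)) (p.2.2 : E3) ≤ 2 / p.2.1 ∧
            |(inner ℝ ((e : E3)) (cross3 (p.1 : E3) (p.2.2 : E3)) : ℝ)| < 4 * s}
        ≤ ENNReal.ofReal (C * s * |Real.log s|) := by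
  refine ⟨2016, fun s ⟨hs, hs₁⟩ => ?_⟩
  have hlog : Real.log s ≤ -1 / 2 := by
    have := Real.log_le_log hs hs₁
    rw [one_div, Real.log_inv] at this
    linarith [Real.log_two_gt_d9]
  refine (lamD_setOf_angle_inner_cross3_le (by simp) hs (by linarith)).trans ?_
  rw [← ENNReal.ofReal_ofNat, ← ENNReal.ofReal_mul (mul_nonneg hs.le (by linarith)),
    abs_of_nonpos (by linarith)]
  exact ENNReal.ofReal_le_ofReal (by nlinarith [mul_le_mul_of_nonneg_left hlog hs.le])
end
end
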